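/- There exists a surjective ℂ-algebra homomorphism from R/J onto R/I, where J is the ideal of R generated by the single element x₁y₁ + x₂y₂ + ⋯ + xₙyₙ, and I is the ideal of R generated by the n−2 elements a_{i,1}x₁y₁ + a_{i,2}x₂y₂ + a_{i,3}xᵢyᵢ for 3 ≤ i ≤ n. (R/J is the affine coordinate ring of the cone over the quadric Dₙ/P ⊂ ℙ^{2n−1}, and R/I is the Cox ring of a Dₙ-surface; thus Spec of the Cox ring embeds as a closed subvariety of the cone over Dₙ/P.) -/

import Mathlib

/-!
Every linear combination `∑ₖ λₖ gₖ` of the generators of `I` has the shape `∑ᵢ cᵢ xᵢ yᵢ`. The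
coefficient vectors of the generators span a subspace of `ℂⁿ` lying in no coordinate hyperplane,
so, `ℂ` being infinite, it contains a vector `c` with all `cᵢ ≠ 0`. The substitution `xᵢ ↦ cᵢ xᵢ`
is then an automorphism of `R` mapping `x₁y₁ + ⋯ + xₙyₙ` to `∑ᵢ cᵢ xᵢ yᵢ ∈ I`, so it descends to
a surjection `R/J → R/I`.
-/

noncomputable section
namespace ADEPaper

/-- The polynomial ring `R = ℂ[x₁, y₁, …, xₙ, yₙ]`: the variable `(i, false)` is `x_{i+1}`
and `(i, true)` is `y_{i+1}` (so `i : Fin n` corresponds to the paper's subscript `i + 1`). -/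
abbrev R (n : ℕ) : Type := MvPolynomial (Fin n × Bool) ℂ

/-- The variable `x_{i+1}`. -/
def xv (n : ℕ) (i : Fin n) : R n := MvPolynomial.X (i, false)

/-- The variable `y_{i+1}`. -/
def yv (n : ℕ) (i : Fin n) : R n := MvPolynomial.X (i, true)

end ADEPaper

namespace MvPolynomial

variable {σ R : Type*} [CommSemiring R]

theorem aeval_C_mul_X_surjective {w : σ → R} (hw : ∀ s, IsUnit (w s)) :
    Function.Surjective (aeval fun s => C (w s) * X s : MvPolynomial σ R →ₐ[R] _) := by
  have h : (aeval fun s => C (w s) * X s).comp (aeval fun s => C (↑(hw s).unit⁻¹ : R) * X s) =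
      AlgHom.id R (MvPolynomial σ R) :=
    algHom_ext fun s => by simp [← mul_assoc, ← C_mul]
  exact Function.RightInverse.surjective (DFunLike.congr_fun h)

end MvPolynomial

theorem exists_mem_span_forall_ne_zero {K ι : Type*} [Field K] [Infinite K] [Finite ι]
    {S : Set (ι → K)} (hS : ∀ i, ∃ s ∈ S, s i ≠ 0) :
    ∃ v ∈ Submodule.span K S, ∀ i, v i ≠ 0 :=
  Module.Dual.exists_forall_mem_ne_zero_of_forall_exists _ (fun i => LinearMap.proj i) fun i =>
    (hS i).imp fun _ hs => ⟨Submodule.subset_span hs.1, hs.2⟩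

namespace ADEPaper

open MvPolynomial

variable {n : ℕ}

def weightedSumXY (n : ℕ) : (Fin n → ℂ) →ₗ[ℂ] R n :=
  Fintype.linearCombination ℂ fun i => xv n i * yv n i

theorem weightedSumXY_apply (v : Fin n → ℂ) :
    weightedSumXY n v = ∑ i, C (v i) * (xv n i * yv n i) := by
  simp [weightedSumXY, Fintype.linearCombination_apply, smul_eq_C_mul]

theorem weightedSumXY_single_add_single_add_single (i j k : Fin n) (α β γ : ℂ) :
    weightedSumXY n (Pi.single i α + Pi.single j β + Pi.single k γ) =
      C α * (xv n i * yv n i) + C β * (xv n j * yv n j) + C γ * (xv n k * yv n k) := by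
  simp [weightedSumXY, smul_eq_C_mul]

theorem aeval_C_mul_X_sum_xv_mul_yv (w : Fin n × Bool → ℂ) :
    aeval (fun p => C (w p) * X p) (∑ i, xv n i * yv n i) =
      weightedSumXY n fun i => w (i, false) * w (i, true) := by
  simp only [weightedSumXY_apply, xv, yv, map_sum, map_mul, aeval_X]
  exact Finset.sum_congr rfl fun i _ => by ring

def generatorCoeffs (a : ℕ → ℕ → ℂ) (i₀ i₁ k : Fin n) : Fin n → ℂ :=
  Pi.single i₀ (a (k + 1) 1) + Pi.single i₁ (a (k + 1) 2) + Pi.single k (a (k + 1) 3)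

theorem exists_generatorCoeffs_ne_zero (hn : 3 ≤ n) (a : ℕ → ℕ → ℂ)
    (ha : ∀ i : ℕ, 3 ≤ i → i ≤ n → a i 1 ≠ 0 ∧ a i 2 ≠ 0 ∧ a i 3 ≠ 0) (i₀ i₁ : Fin n)
    (h₀ : (i₀ : ℕ) = 0) (h₁ : (i₁ : ℕ) = 1) (i : Fin n) :
    ∃ s ∈ generatorCoeffs a i₀ i₁ '' {k | 2 ≤ (k : ℕ)}, s i ≠ 0 := by
  obtain hi | hi := lt_or_ge (i : ℕ) 2
  · obtain ⟨h31, h32, -⟩ := ha 3 le_rfl hn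
    refine ⟨_, ⟨⟨2, hn⟩, show 2 ≤ 2 from le_rfl, rfl⟩, ?_⟩
    obtain h | h : (i : ℕ) = 0 ∨ (i : ℕ) = 1 := by omega
    all_goals simp [generatorCoeffs, Pi.single_apply, Fin.ext_iff, h, h₀, h₁, h31, h32]
  · refine ⟨_, ⟨i, hi, rfl⟩, ?_⟩
    have : (i : ℕ) ≠ 0 ∧ (i : ℕ) ≠ 1 := by omega
    simpa [generatorCoeffs, Pi.single_apply, Fin.ext_iff, h₀, h₁, this] using
      (ha (i + 1) (by omega) i.isLt).2.2

theorem weightedSumXY_mem_span_generators (a : ℕ → ℕ → ℂ) (i₀ i₁ : Fin n) {v : Fin n → ℂ}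
    (hv : v ∈ Submodule.span ℂ (generatorCoeffs a i₀ i₁ '' {k | 2 ≤ (k : ℕ)})) :
    weightedSumXY n v ∈ Ideal.span {p : R n | ∃ k : Fin n, 2 ≤ (k : ℕ) ∧
      p = C (a ((k : ℕ) + 1) 1) * (xv n i₀ * yv n i₀) + C (a ((k : ℕ) + 1) 2) * (xv n i₁ * yv n i₁)
        + C (a ((k : ℕ) + 1) 3) * (xv n k * yv n k)} := by
  refine (Submodule.map_span_le _ _ ((Ideal.span _).restrictScalars ℂ)).2 ?_ ⟨v, hv, rfl⟩
  rintro _ ⟨k, hk, rfl⟩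
  exact Ideal.subset_span ⟨k, hk, weightedSumXY_single_add_single_add_single _ _ _ _ _ _⟩

/-- `R/J`, where `J = (x₁y₁ + x₂y₂ + ⋯ + xₙyₙ)`, is the affine coordinate ring of the cone
over the quadric `Dₙ/P ⊂ ℙ^{2n-1}`, and `R/I`, where `I` is generated by the `n - 2`
quadrics `a_{i,1}x₁y₁ + a_{i,2}x₂y₂ + a_{i,3}xᵢyᵢ` (`3 ≤ i ≤ n`, all `a_{i,j} ≠ 0`), is the
Cox ring of a `Dₙ`-surface.  There is a surjective ℂ-algebra homomorphism `R/J → R/I`;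
thus `Spec` of the Cox ring embeds as a closed subvariety of the cone over `Dₙ/P`. -/
theorem cox_ring_embeds_in_cone (n : ℕ) (hn : 3 ≤ n) (a : ℕ → ℕ → ℂ)
    (ha : ∀ i : ℕ, 3 ≤ i → i ≤ n → a i 1 ≠ 0 ∧ a i 2 ≠ 0 ∧ a i 3 ≠ 0) :
    ∃ φ : (R n ⧸ Ideal.span ({∑ i : Fin n, xv n i * yv n i} : Set (R n))) →ₐ[ℂ]
          (R n ⧸ Ideal.span {p : R n | ∃ k : Fin n, 2 ≤ (k : ℕ) ∧
            p = MvPolynomial.C (a ((k : ℕ) + 1) 1) * (xv n ⟨0, by omega⟩ * yv n ⟨0, by omega⟩)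
              + MvPolynomial.C (a ((k : ℕ) + 1) 2) * (xv n ⟨1, by omega⟩ * yv n ⟨1, by omega⟩)
              + MvPolynomial.C (a ((k : ℕ) + 1) 3) * (xv n k * yv n k)}),
      Function.Surjective φ := by
  set i₀ : Fin n := ⟨0, by omega⟩
  set i₁ : Fin n := ⟨1, by omega⟩
  obtain ⟨v, hvW, hv⟩ := exists_mem_span_forall_ne_zero
    (exists_generatorCoeffs_ne_zero hn a ha i₀ i₁ rfl rfl)
  let w (p : Fin n × Bool) : ℂ := if p.2 then 1 else v p.1
  have hw (p : Fin n × Bool) : IsUnit (w p) := by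
    by_cases h : p.2 <;> simp [w, h, hv p.1]
  refine ⟨Ideal.quotientMapₐ _ (aeval fun p => C (w p) * X p) ?hq,
    Ideal.quotientMap_surjective (H := ?hq) (aeval_C_mul_X_surjective hw)⟩
  rw [Ideal.span_singleton_le_iff_mem, Ideal.mem_comap, aeval_C_mul_X_sum_xv_mul_yv]
  convert weightedSumXY_mem_span_generators a i₀ i₁ hvW
  simp [w]

end ADEPaper
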